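/- Let (P, ≤, *, 1) be a strongly sectionally pseudocomplemented poset, Θ a congruence on P, n ≥ 1 and a₁, …, aₙ ∈ P, and let ≤' be the partial order on P/Θ given by [a]Θ ≤' [b]Θ iff a*b ∈ [1]Θ. Then the set of common upper bounds of [a₁]Θ, …, [aₙ]Θ in (P/Θ, ≤') equals {[x]Θ : x is a common upper bound of a₁, …, aₙ in (P, ≤)}. -/

import Mathlib

/-- `star` makes the poset `P` sectionally pseudocomplemented: for all `a b`,
`star a b` is the greatest element `c` of `P` with `L(U(a,b), c) = L(b)`,
where `L(U(a,b), c)` is the set of common lower bounds of `U(a,b) ∪ {c}` and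
`U(a,b)` is the set of common upper bounds of `a` and `b`. -/
def IsSPPoset {P : Type*} [PartialOrder P] (star : P → P → P) : Prop :=
  ∀ a b : P,
    (∀ x : P, ((∀ u : P, a ≤ u → b ≤ u → x ≤ u) ∧ x ≤ star a b) ↔ x ≤ b) ∧
    ∀ c : P, (∀ x : P, ((∀ u : P, a ≤ u → b ≤ u → x ≤ u) ∧ x ≤ c) ↔ x ≤ b) →
      c ≤ star a b

/-- A strongly sectionally pseudocomplemented poset: sectionally pseudocomplemented,
with greatest element `one`, satisfying `x ≤ (x*y)*y`. -/
def IsStronglySPPoset {P : Type*} [PartialOrder P] (star : P → P → P) (one : P) : Prop :=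
  IsSPPoset star ∧ (∀ x : P, x ≤ one) ∧ ∀ x y : P, x ≤ star (star x y) y

open Classical in
/-- The minimum of two (comparable) elements of a poset. -/
noncomputable def pmin {P : Type*} [PartialOrder P] (a c : P) : P :=
  if a ≤ c then a else c

/-- A binary relation on a poset is min-stable if it is closed under taking minima of
componentwise comparable pairs. -/
def MinStable {P : Type*} [PartialOrder P] (ρ : P → P → Prop) : Prop :=
  ∀ a b c d : P, ρ a b → ρ c d → (a ≤ c ∨ c ≤ a) → (b ≤ d ∨ d ≤ b) →
    ρ (pmin a c) (pmin b d)

/-- A congruence on a sectionally pseudocomplemented poset: a min-stable equivalence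
relation compatible with `star`. -/
def IsSPPCong {P : Type*} [PartialOrder P] (star : P → P → P) (Θ : P → P → Prop) : Prop :=
  Equivalence Θ ∧ MinStable Θ ∧
    ∀ a b c d : P, Θ a b → Θ c d → Θ (star a c) (star b d)

/-- A filter of a sectionally pseudocomplemented poset with greatest element `one`. -/
def IsSPPFilter {P : Type*} [PartialOrder P] (star : P → P → P) (one : P) (F : Set P) :
    Prop :=
  one ∈ F ∧
  (∀ x y z : P, star x y ∈ F → star y x ∈ F →
    star (star x z) (star y z) ∈ F ∧ star (star z x) (star z y) ∈ F) ∧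
  (∀ x y z v : P, star x y ∈ F → star y x ∈ F → star z v ∈ F → star v z ∈ F →
    (x ≤ z ∨ z ≤ x) → (y ≤ v ∨ v ≤ y) → star (pmin x z) (pmin y v) ∈ F)

/-- `Φ(M)`: the relation of all pairs `(x, y)` with `star x y ∈ M` and `star y x ∈ M`. -/
def PhiRel {P : Type*} (star : P → P → P) (M : Set P) : P → P → Prop :=
  fun x y => star x y ∈ M ∧ star y x ∈ M

/-- The congruence class of `one` under `Θ`. -/
def oneClass {P : Type*} (Θ : P → P → Prop) (one : P) : Set P := {x : P | Θ x one}

/-!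
If `aᵢ * b ≡ 1` for every `i`, build an upper bound congruent to `b` one element at a time:
given `x ≡ b` above the earlier `aⱼ`, the element `(a * x) * x` lies above `a` (strong
sectional pseudocomplementation) and above `x`, and since `a * x ≡ a * b ≡ 1` it is congruent
to `1 * x = x`. Conversely `a ≤ x ≡ b` gives `a * b ≡ a * x = 1`.
-/

section SectionalPseudocomplement

variable {P : Type*} [PartialOrder P] {star : P → P → P} {one : P}

namespace IsSPPoset

theorem le_star (h : IsSPPoset star) (a b : P) : b ≤ star a b :=
  (((h a b).1 b).2 le_rfl).2

theorem star_eq_top_of_le (h : IsSPPoset star) (htop : ∀ x : P, x ≤ one) {a b : P}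
    (hab : a ≤ b) : star a b = one := by
  refine le_antisymm (htop _) ((h a b).2 one fun x => ⟨?_, ?_⟩)
  · rintro ⟨hx, -⟩
    exact hx b hab le_rfl
  · exact fun hx => ⟨fun u _ hbu => hx.trans hbu, htop x⟩

theorem top_star (h : IsSPPoset star) (htop : ∀ x : P, x ≤ one) (b : P) :
    star one b = b := by
  refine le_antisymm (((h one b).1 (star one b)).1 ⟨fun u hu _ => ?_, le_rfl⟩) (h.le_star one b)
  rw [le_antisymm (htop u) hu]
  exact htop _

end IsSPPoset

section Congruence

variable {Θ : P → P → Prop} (hΘ : Equivalence Θ)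
  (hcompat : ∀ a b c d : P, Θ a b → Θ c d → Θ (star a c) (star b d))
include hΘ hcompat

theorem star_rel_top_of_le_of_rel (h : IsSPPoset star) (htop : ∀ x : P, x ≤ one)
    {a b x : P} (hbx : Θ b x) (hax : a ≤ x) : Θ (star a b) one := by
  simpa only [h.star_eq_top_of_le htop hax] using hcompat a a b x (hΘ.refl a) hbx

theorem exists_le_rel_of_star_rel_top (h : IsStronglySPPoset star one) {ι : Type*}
    (a : ι → P) (b : P) (s : Finset ι) (hs : ∀ i ∈ s, Θ (star (a i) b) one) :
    ∃ x, Θ b x ∧ ∀ i ∈ s, a i ≤ x := by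
  classical
  obtain ⟨hsp, htop, hstrong⟩ := h
  induction s using Finset.induction_on with
  | empty => exact ⟨b, hΘ.refl b, by simp⟩
  | insert j s _ ih =>
    obtain ⟨x, hbx, hx⟩ := ih fun i hi => hs i (Finset.mem_insert_of_mem hi)
    have hjx : Θ (star (a j) x) one :=
      hΘ.trans (hcompat _ _ _ _ (hΘ.refl _) (hΘ.symm hbx)) (hs j (Finset.mem_insert_self j s))
    have hxy : Θ (star (star (a j) x) x) x := by
      simpa only [hsp.top_star htop] using hcompat _ _ x x hjx (hΘ.refl x)
    refine ⟨star (star (a j) x) x, hΘ.trans hbx (hΘ.symm hxy), ?_⟩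
    rintro i hi
    rcases Finset.mem_insert.1 hi with rfl | hi
    · exact hstrong (a i) x
    · exact (hx i hi).trans (hsp.le_star _ x)

end Congruence

end SectionalPseudocomplement

theorem stmt_19_general {P : Type*} [PartialOrder P] (star : P → P → P) (one : P)
    (h : IsStronglySPPoset star one)
    (Θ : P → P → Prop) (hΘ : IsSPPCong star Θ)
    (le' : P → P → Prop) (hle' : ∀ a b : P, le' a b ↔ Θ (star a b) one)
    (n : ℕ) (a : Fin n → P) :
    ∀ b : P, (∀ i : Fin n, le' (a i) b) ↔ ∃ x : P, Θ b x ∧ ∀ i : Fin n, a i ≤ x := by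
  obtain ⟨hequiv, -, hcompat⟩ := hΘ
  intro b
  simp only [hle']
  constructor
  · intro hb
    obtain ⟨x, hbx, hx⟩ := exists_le_rel_of_star_rel_top hequiv hcompat h a b Finset.univ
      fun i _ => hb i
    exact ⟨x, hbx, fun i => hx i (Finset.mem_univ i)⟩
  · rintro ⟨x, hbx, hx⟩ i
    exact star_rel_top_of_le_of_rel hequiv hcompat h.1 h.2.1 hbx (hx i)

theorem stmt_19 {P : Type*} [PartialOrder P] (star : P → P → P) (one : P)
    (h : IsStronglySPPoset star one)
    (Θ : P → P → Prop) (hΘ : IsSPPCong star Θ)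
    (le' : P → P → Prop) (hle' : ∀ a b : P, le' a b ↔ Θ (star a b) one)
    (n : ℕ) (hn : 1 ≤ n) (a : Fin n → P) :
    ∀ b : P, (∀ i : Fin n, le' (a i) b) ↔ ∃ x : P, Θ b x ∧ ∀ i : Fin n, a i ≤ x :=
  stmt_19_general star one h Θ hΘ le' hle' n a
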